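/- Conflict resolution for non-crossing matchings: given a cyclic order on the vertices of a face and a maximum matching M of the bipartite alignment graph B(f), if (a,c) and (b,d) are two matching edges in conflict with a, b, c, d appearing in this clockwise order, then M' = (M \ {(a,c),(b,d)}) ∪ {(a,d),(b,c)} is also a maximum matching with strictly fewer conflicting pairs; consequently a planar (conflict-free) maximum matching of B(f) exists. -/

import Mathlib

/-- `ArcBtw a b c` means `b` lies strictly inside the clockwise arc from `a` to `c`
on a circle of `n` points labelled `0, …, n-1` in clockwise order. -/
def ArcBtw {n : ℕ} (a b c : Fin n) : Prop :=
  ((a : ℕ) < b ∧ (b : ℕ) < c) ∨ ((b : ℕ) < c ∧ (c : ℕ) < a) ∨ ((c : ℕ) < a ∧ (a : ℕ) < b)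

/-- Two alignment edges `(a, c)` and `(b, d)` are in conflict (cross) iff exactly
one of `b`, `d` lies on the open arc from `a` to `c`. -/
def SegConflict {n : ℕ} (p q : Fin n × Fin n) : Prop :=
  Xor' (ArcBtw p.1 q.1 p.2) (ArcBtw p.1 q.2 p.2)

/-- `M` is a matching: distinct pairs of `M` use pairwise distinct vertices. -/
def IsPairMatching {n : ℕ} (M : Finset (Fin n × Fin n)) : Prop :=
  (∀ p ∈ M, p.1 ≠ p.2) ∧
  ∀ p ∈ M, ∀ q ∈ M, p ≠ q → p.1 ≠ q.1 ∧ p.1 ≠ q.2 ∧ p.2 ≠ q.1 ∧ p.2 ≠ q.2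

/-- The number of conflicting (crossing) ordered pairs of edges of `M`. -/
noncomputable def conflictCount {n : ℕ} (M : Finset (Fin n × Fin n)) : ℕ :=
  {pq : (Fin n × Fin n) × (Fin n × Fin n) |
    pq.1 ∈ M ∧ pq.2 ∈ M ∧ pq.1 ≠ pq.2 ∧ SegConflict pq.1 pq.2}.ncard

/-! The open arc from `x` to `y` is connected, so it cannot contain `a` and `c` while missing
both `b` and `d` when `a, b, c, d` are in clockwise order (and symmetrically for `b`, `d`).
Reading crossings as "exactly one endpoint inside the arc", this shows that every chord
crosses `{ad, bc}` at most as often as `{ac, bd}`. Since `ac` and `bd` cross while `ad` and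
`bc` do not, uncrossing strictly lowers the number of crossing pairs without changing the
covered vertices, and iterating it ends in a planar matching of the same size. -/

open Finset

theorem Finset.card_sdiff_pair_union_pair {α : Type*} [DecidableEq α] {s : Finset α}
    {x y u v : α} (hx : x ∈ s) (hy : y ∈ s) (hxy : x ≠ y) (hu : u ∉ s) (hv : v ∉ s)
    (huv : u ≠ v) : #((s \ {x, y}) ∪ {u, v}) = #s := by
  have hsub : {x, y} ⊆ s := insert_subset hx (singleton_subset_iff.2 hy)
  have hdisj : Disjoint (s \ {x, y}) {u, v} := by
    simp [disjoint_insert_right, hu, hv]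
  have hle := card_le_card hsub
  rw [card_pair hxy] at hle
  rw [card_union_of_disjoint hdisj, card_sdiff_of_subset hsub, card_pair hxy, card_pair huv]
  omega

theorem Finset.sum_sum_union_lt_of_le {α β : Type*} [DecidableEq α] [AddCommMonoid β]
    [PartialOrder β] [IsOrderedCancelAddMonoid β] {N G H : Finset α} {f : α → α → β}
    (hG : Disjoint N G) (hH : Disjoint N H)
    (hrow : ∀ p ∈ N, ∑ q ∈ G, f p q ≤ ∑ q ∈ H, f p q)
    (hcol : ∀ q ∈ N, ∑ p ∈ G, f p q ≤ ∑ p ∈ H, f p q)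
    (hdiag : ∑ p ∈ G, ∑ q ∈ G, f p q < ∑ p ∈ H, ∑ q ∈ H, f p q) :
    ∑ p ∈ N ∪ G, ∑ q ∈ N ∪ G, f p q < ∑ p ∈ N ∪ H, ∑ q ∈ N ∪ H, f p q := by
  have split : ∀ K, Disjoint N K → ∑ p ∈ N ∪ K, ∑ q ∈ N ∪ K, f p q =
      ∑ p ∈ N, ∑ q ∈ N, f p q + (∑ p ∈ N, ∑ q ∈ K, f p q + ∑ q ∈ N, ∑ p ∈ K, f p q) +
        ∑ p ∈ K, ∑ q ∈ K, f p q := by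
    intro K hK
    simp only [sum_union hK, sum_add_distrib]
    rw [sum_comm (s := K) (t := N)]
    abel
  rw [split G hG, split H hH]
  exact add_lt_add_of_le_of_lt
    (add_le_add_right (add_le_add (sum_le_sum hrow) (sum_le_sum hcol)) _) hdiag

section

variable {n : ℕ}

open scoped Classical

theorem ArcBtw.rotate {a b c d : Fin n} (hab : ArcBtw a b c) (hcd : ArcBtw a c d) :
    ArcBtw b c d ∧ ArcBtw b d a := by
  unfold ArcBtw at *; omega

theorem ArcBtw.not_separates {a b c d x y : Fin n} (hab : ArcBtw a b c) (hcd : ArcBtw a c d)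
    (ha : ArcBtw x a y) (hc : ArcBtw x c y) : ArcBtw x b y ∨ ArcBtw x d y := by
  unfold ArcBtw at *; omega

theorem segConflict_iff {p q : Fin n × Fin n} :
    SegConflict p q ↔ Xor (ArcBtw p.1 q.1 p.2) (ArcBtw p.1 q.2 p.2) :=
  Iff.rfl

theorem not_segConflict_self (p : Fin n × Fin n) : ¬ SegConflict p p := by
  simp only [segConflict_iff, Xor, ArcBtw]; omega

theorem SegConflict.ne {p q : Fin n × Fin n} (h : SegConflict p q) : p ≠ q := by
  rintro rfl
  exact not_segConflict_self p h

theorem segConflict_comm {x y u v : Fin n} (hxu : x ≠ u) (hxv : x ≠ v) (hyu : y ≠ u)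
    (hyv : y ≠ v) : SegConflict (x, y) (u, v) ↔ SegConflict (u, v) (x, y) := by
  simp only [segConflict_iff, Xor, ArcBtw, ← Fin.val_ne_iff] at *
  omega

theorem segConflict_of_arcBtw {a b c d : Fin n} (hab : ArcBtw a b c) (hcd : ArcBtw a c d) :
    SegConflict (a, c) (b, d) ∧ SegConflict (b, d) (a, c) := by
  simp only [segConflict_iff, Xor, ArcBtw] at *; omega

theorem not_segConflict_of_arcBtw {a b c d : Fin n} (hab : ArcBtw a b c) (hcd : ArcBtw a c d) :
    ¬ SegConflict (a, d) (b, c) ∧ ¬ SegConflict (b, c) (a, d) := by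
  simp only [segConflict_iff, Xor, ArcBtw] at *; omega

theorem ite_segConflict_uncross_le {a b c d : Fin n} (hab : ArcBtw a b c) (hcd : ArcBtw a c d)
    (p : Fin n × Fin n) :
    (if SegConflict p (a, d) then 1 else 0) + (if SegConflict p (b, c) then 1 else 0)
      ≤ (if SegConflict p (a, c) then 1 else 0) + (if SegConflict p (b, d) then 1 else 0) := by
  obtain ⟨hbc, hbd⟩ := hab.rotate hcd
  have hac := ArcBtw.not_separates (x := p.1) (y := p.2) hab hcd
  have hbd := ArcBtw.not_separates (x := p.1) (y := p.2) hbc hbd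
  by_cases hA : ArcBtw p.1 a p.2 <;> by_cases hB : ArcBtw p.1 b p.2 <;>
    by_cases hC : ArcBtw p.1 c p.2 <;> by_cases hD : ArcBtw p.1 d p.2 <;>
    simp_all [segConflict_iff, Xor]

theorem IsPairMatching.segConflict_comm {M : Finset (Fin n × Fin n)} (hM : IsPairMatching M)
    {p q : Fin n × Fin n} (hp : p ∈ M) (hq : q ∈ M) : SegConflict p q ↔ SegConflict q p := by
  obtain rfl | hpq := eq_or_ne p q
  · rfl
  obtain ⟨h11, h12, h21, h22⟩ := hM.2 p hp q hq hpq
  exact _root_.segConflict_comm h11 h12 h21 h22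

theorem IsPairMatching.uncross {M : Finset (Fin n × Fin n)} (hM : IsPairMatching M)
    {a b c d : Fin n} (hac : (a, c) ∈ M) (hbd : (b, d) ∈ M) (hne : (a, c) ≠ (b, d)) :
    IsPairMatching ((M \ {(a, c), (b, d)}) ∪ {(a, d), (b, c)}) := by
  have hends := hM.2 _ hac _ hbd hne
  obtain ⟨hM₁, hM₂⟩ := hM
  constructor <;> simp only [mem_union, mem_sdiff, mem_insert, mem_singleton] <;> grind

theorem IsPairMatching.uncrossed_notMem {M : Finset (Fin n × Fin n)} (hM : IsPairMatching M)
    {a b c d : Fin n} (hac : (a, c) ∈ M) (hbd : (b, d) ∈ M) (hne : (a, c) ≠ (b, d)) :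
    (a, d) ∉ M ∧ (b, c) ∉ M := by
  have := hM.2 _ hac _ hbd hne
  constructor <;> intro h
  · exact (hM.2 _ h _ hac (by grind)).1 rfl
  · exact (hM.2 _ h _ hbd (by grind)).1 rfl

theorem IsPairMatching.card_uncross {M : Finset (Fin n × Fin n)} (hM : IsPairMatching M)
    {a b c d : Fin n} (hac : (a, c) ∈ M) (hbd : (b, d) ∈ M) (hne : (a, c) ≠ (b, d)) :
    #((M \ {(a, c), (b, d)}) ∪ {(a, d), (b, c)}) = #M :=
  have ⟨had, hbc⟩ := hM.uncrossed_notMem hac hbd hne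
  card_sdiff_pair_union_pair hac hbd hne had hbc
    fun h => (hM.2 _ hac _ hbd hne).1 (Prod.ext_iff.1 h).1

theorem conflictCount_eq_sum (M : Finset (Fin n × Fin n)) :
    conflictCount M = ∑ p ∈ M, ∑ q ∈ M, if SegConflict p q then 1 else 0 := by
  have hset : {pq : (Fin n × Fin n) × (Fin n × Fin n) |
      pq.1 ∈ M ∧ pq.2 ∈ M ∧ pq.1 ≠ pq.2 ∧ SegConflict pq.1 pq.2} =
      ↑((M ×ˢ M).filter fun pq => SegConflict pq.1 pq.2) := by
    ext ⟨p, q⟩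
    simp only [Set.mem_ofPred_eq, coe_filter, mem_product]
    have := @SegConflict.ne n p q
    tauto
  rw [conflictCount, hset, Set.ncard_coe_finset, card_filter, sum_product]

theorem conflictCount_uncross_lt {M : Finset (Fin n × Fin n)} (hM : IsPairMatching M)
    {a b c d : Fin n} (hac : (a, c) ∈ M) (hbd : (b, d) ∈ M) (hab : ArcBtw a b c)
    (hcd : ArcBtw a c d) :
    conflictCount ((M \ {(a, c), (b, d)}) ∪ {(a, d), (b, c)}) < conflictCount M := by
  have hne := (segConflict_of_arcBtw hab hcd).1.ne
  have hne' : (a, d) ≠ (b, c) := fun h => (hM.2 _ hac _ hbd hne).1 (Prod.ext_iff.1 h).1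
  have hold : {(a, c), (b, d)} ⊆ M := insert_subset hac (singleton_subset_iff.2 hbd)
  obtain ⟨had, hbc⟩ := hM.uncrossed_notMem hac hbd hne
  set N := M \ {(a, c), (b, d)}
  have hrow : ∀ p ∈ N, ∑ q ∈ {(a, d), (b, c)}, (if SegConflict p q then 1 else 0)
      ≤ ∑ q ∈ {(a, c), (b, d)}, (if SegConflict p q then 1 else 0) := by
    intro p _
    rw [sum_pair hne, sum_pair hne']
    exact ite_segConflict_uncross_le hab hcd p
  have hcol : ∀ q ∈ N, ∑ p ∈ {(a, d), (b, c)}, (if SegConflict p q then 1 else 0)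
      ≤ ∑ p ∈ {(a, c), (b, d)}, (if SegConflict p q then 1 else 0) := by
    intro q hq
    have hM' := hM.uncross hac hbd hne
    calc _ = ∑ p ∈ {(a, d), (b, c)}, (if SegConflict q p then 1 else 0) :=
          sum_congr rfl fun p hp => by
            rw [hM'.segConflict_comm (mem_union_right _ hp) (mem_union_left _ hq)]
      _ ≤ ∑ p ∈ {(a, c), (b, d)}, (if SegConflict q p then 1 else 0) := hrow q hq
      _ = _ := sum_congr rfl fun p hp => by
            rw [hM.segConflict_comm (mem_sdiff.1 hq).1 (hold hp)]
  have hdiag : ∑ p ∈ {(a, d), (b, c)}, ∑ q ∈ {(a, d), (b, c)}, (if SegConflict p q then 1 else 0)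
      < ∑ p ∈ {(a, c), (b, d)}, ∑ q ∈ {(a, c), (b, d)}, (if SegConflict p q then 1 else 0) := by
    simp [sum_pair hne, sum_pair hne', not_segConflict_self, segConflict_of_arcBtw hab hcd,
      not_segConflict_of_arcBtw hab hcd]
  have hG : Disjoint N {(a, d), (b, c)} :=
    disjoint_of_subset_left sdiff_subset (by simp [disjoint_insert_right, had, hbc])
  rw [conflictCount_eq_sum, conflictCount_eq_sum]
  conv_rhs => rw [← sdiff_union_of_subset hold]
  exact sum_sum_union_lt_of_le hG disjoint_sdiff_self_left hrow hcol hdiag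

theorem uncross_subset_product {M : Finset (Fin n × Fin n)} {s t : Finset (Fin n)}
    (hM : M ⊆ s ×ˢ t) {a b c d : Fin n} (hac : (a, c) ∈ M) (hbd : (b, d) ∈ M) :
    (M \ {(a, c), (b, d)}) ∪ {(a, d), (b, c)} ⊆ s ×ˢ t := by
  have hac' := mem_product.1 (hM hac)
  have hbd' := mem_product.1 (hM hbd)
  refine union_subset (sdiff_subset.trans hM) ?_
  simp [insert_subset_iff, mem_product, hac', hbd']

theorem IsPairMatching.exists_arcBtw_of_segConflict {M : Finset (Fin n × Fin n)}
    (hM : IsPairMatching M) {p q : Fin n × Fin n} (hp : p ∈ M) (hq : q ∈ M)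
    (hconf : SegConflict p q) :
    ∃ a b c d, (a, c) ∈ M ∧ (b, d) ∈ M ∧ ArcBtw a b c ∧ ArcBtw a c d := by
  obtain ⟨a, c⟩ := p
  obtain ⟨b, d⟩ := q
  have hac := hM.1 _ hp
  have hbd := hM.1 _ hq
  have hdisj := hM.2 _ hp _ hq hconf.ne
  simp only [segConflict_iff, Xor, ArcBtw, ← Fin.val_ne_iff] at hac hbd hdisj hconf
  rcases hconf with ⟨hb, hd⟩ | ⟨hd, hb⟩
  · exact ⟨a, b, c, d, hp, hq, hb, by unfold ArcBtw; omega⟩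
  · exact ⟨b, a, d, c, hq, hp, by unfold ArcBtw; omega, by unfold ArcBtw; omega⟩

theorem exists_planar_matching {M : Finset (Fin n × Fin n)} {s t : Finset (Fin n)}
    (hMst : M ⊆ s ×ˢ t) (hM : IsPairMatching M) :
    ∃ M' : Finset (Fin n × Fin n), M' ⊆ s ×ˢ t ∧ IsPairMatching M' ∧
      #M' = #M ∧ ∀ p ∈ M', ∀ q ∈ M', p ≠ q → ¬ SegConflict p q := by
  induction hk : conflictCount M using Nat.strong_induction_on generalizing M with
  | _ k ih =>
    by_cases hplanar : ∀ p ∈ M, ∀ q ∈ M, p ≠ q → ¬ SegConflict p q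
    · exact ⟨M, hMst, hM, rfl, hplanar⟩
    push Not at hplanar
    obtain ⟨p, hp, q, hq, -, hconf⟩ := hplanar
    obtain ⟨a, b, c, d, hac, hbd, hab, hcd⟩ := hM.exists_arcBtw_of_segConflict hp hq hconf
    have hne := (segConflict_of_arcBtw hab hcd).1.ne
    obtain ⟨M', hM'st, hM', hcard, hplanar'⟩ :=
      ih _ (hk ▸ conflictCount_uncross_lt hM hac hbd hab hcd)
        (uncross_subset_product hMst hac hbd) (hM.uncross hac hbd hne) rfl
    exact ⟨M', hM'st, hM', hcard.trans (hM.card_uncross hac hbd hne), hplanar'⟩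

end

theorem uncrossing_matching_general {n : ℕ} (L R : Finset (Fin n))
    (M : Finset (Fin n × Fin n)) (hM : M ⊆ L ×ˢ R) (hmatch : IsPairMatching M) :
    (∀ a b c d : Fin n,
      (a, c) ∈ M → (b, d) ∈ M → SegConflict (a, c) (b, d) →
      ArcBtw a b c → ArcBtw a c d →
      (IsPairMatching ((M \ {(a, c), (b, d)}) ∪ {(a, d), (b, c)}) ∧
        ((M \ {(a, c), (b, d)}) ∪ {(a, d), (b, c)}).card = M.card ∧
        conflictCount ((M \ {(a, c), (b, d)}) ∪ {(a, d), (b, c)}) < conflictCount M)) ∧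
    (∃ M' : Finset (Fin n × Fin n), M' ⊆ L ×ˢ R ∧ IsPairMatching M' ∧
      M'.card = M.card ∧ ∀ p ∈ M', ∀ q ∈ M', p ≠ q → ¬ SegConflict p q) :=
  ⟨fun _ _ _ _ hac hbd hconf hab hcd =>
    ⟨hmatch.uncross hac hbd hconf.ne, hmatch.card_uncross hac hbd hconf.ne,
      conflictCount_uncross_lt hmatch hac hbd hab hcd⟩,
    exists_planar_matching hM hmatch⟩

/-- Conflict resolution for non-crossing matchings.  The vertices of
the bipartite alignment graph `B(f)` lie on the boundary cycle of a face, with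
left-open vertices `L` and right-open vertices `R`; every pair in `L × R` is an
edge of `B(f)`, so matchings live in `L ×ˢ R`.  If `(a, c), (b, d) ∈ M` are in
conflict with `a, b, c, d` in clockwise order, then the uncrossed set
`M' = (M \ {(a,c),(b,d)}) ∪ {(a,d),(b,c)}` is again a matching of the same
cardinality (hence still maximum) with strictly fewer conflicting pairs;
consequently there exists a planar (conflict-free) matching of the same
cardinality on the same vertex classes. -/
theorem uncrossing_matching {n : ℕ} (L R : Finset (Fin n)) (hLR : Disjoint L R)
    (M : Finset (Fin n × Fin n)) (hM : M ⊆ L ×ˢ R) (hmatch : IsPairMatching M) :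
    (∀ a b c d : Fin n,
      (a, c) ∈ M → (b, d) ∈ M → SegConflict (a, c) (b, d) →
      ArcBtw a b c → ArcBtw a c d →
      (IsPairMatching ((M \ {(a, c), (b, d)}) ∪ {(a, d), (b, c)}) ∧
        ((M \ {(a, c), (b, d)}) ∪ {(a, d), (b, c)}).card = M.card ∧
        conflictCount ((M \ {(a, c), (b, d)}) ∪ {(a, d), (b, c)}) < conflictCount M)) ∧
    (∃ M' : Finset (Fin n × Fin n), M' ⊆ L ×ˢ R ∧ IsPairMatching M' ∧
      M'.card = M.card ∧ ∀ p ∈ M', ∀ q ∈ M', p ≠ q → ¬ SegConflict p q) :=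
  uncrossing_matching_general L R M hM hmatch
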